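/- Let 0 < λ < 1, let ω be analytic on 𝔻 with |ω(z)| ≤ 1 and ω(0) = a, |a| < 1, and suppose a₂ ∈ ℂ satisfies |a₂| > 1 + λ v(|a|), where v(x) = ∫₀¹ (x+t)/(1+xt) dt. Then the map F(z) = (1/a₂)[1 + λ z ∫₀^z ω(t) dt] has a fixed point in the open unit disk; consequently 1 − a₂ z + λ z ∫₀^z ω(t) dt vanishes somewhere in 𝔻. -/

import Mathlib

/-!
By the Schwarz–Pick lemma, `‖ω z‖ ≤ (‖a‖ + ‖z‖) / (1 + ‖a‖ ‖z‖)`, so the radial primitive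
`g z = ∫₀¹ ω (t z) z dt` of `ω` satisfies `‖g z‖ ≤ v(‖a‖) ‖z‖`, and `g` is `1`-Lipschitz on the
disk since `g' = ω`. Hence with `r = (1 + λ v(‖a‖)) / ‖a₂‖ < 1` the map
`F z = a₂⁻¹ (1 + λ z g z)` sends the closed disk of radius `r` into itself and is a contraction
there with constant `λ (v(‖a‖) + r) / ‖a₂‖ < 1`; Banach's theorem gives the fixed point.
-/

open Metric Complex Set ComplexConjugate Topology

lemma add_div_one_add_mul_le_of_le {x s₁ s₂ : ℝ} (hx₀ : 0 ≤ x) (hx₁ : x ≤ 1) (hs₁ : 0 ≤ s₁)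
    (hs : s₁ ≤ s₂) : (x + s₁) / (1 + x * s₁) ≤ (x + s₂) / (1 + x * s₂) := by
  rw [div_le_div_iff₀ (by positivity) (by nlinarith)]
  nlinarith [mul_nonneg (sub_nonneg.2 hs) (by nlinarith : (0:ℝ) ≤ 1 - x ^ 2)]

lemma normSq_one_sub_conj_mul_sub_normSq_sub (a w : ℂ) :
    normSq (1 - conj a * w) - normSq (w - a) = (1 - normSq a) * (1 - normSq w) := by
  simp only [normSq_apply, sub_re, sub_im, mul_re, mul_im, conj_re, conj_im, one_re, one_im]
  ring

lemma norm_sub_le_norm_one_sub_conj_mul {a w : ℂ} (ha : ‖a‖ ≤ 1) (hw : ‖w‖ ≤ 1) :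
    ‖w - a‖ ≤ ‖1 - conj a * w‖ := by
  have h := normSq_one_sub_conj_mul_sub_normSq_sub a w
  simp only [normSq_eq_norm_sq] at h
  have : 0 ≤ (1 - ‖a‖ ^ 2) * (1 - ‖w‖ ^ 2) := by
    apply mul_nonneg <;> nlinarith [norm_nonneg a, norm_nonneg w]
  exact (pow_le_pow_iff_left₀ (norm_nonneg _) (norm_nonneg _) two_ne_zero).1 (by linarith)

lemma one_sub_conj_mul_ne_zero {a w : ℂ} (ha : ‖a‖ < 1) (hw : ‖w‖ ≤ 1) : 1 - conj a * w ≠ 0 := by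
  rw [sub_ne_zero]
  intro h
  have : ‖conj a * w‖ < 1 := by
    rw [norm_mul, RCLike.norm_conj]
    nlinarith [norm_nonneg a, norm_nonneg w]
  simp [← h] at this

lemma norm_le_of_norm_sub_le_mul_norm_one_sub_conj_mul {a w : ℂ} {s : ℝ} (ha : ‖a‖ < 1)
    (hw : ‖w‖ ≤ 1) (hs₀ : 0 ≤ s) (hs₁ : s ≤ 1) (h : ‖w - a‖ ≤ s * ‖1 - conj a * w‖) :
    ‖w‖ ≤ (‖a‖ + s) / (1 + ‖a‖ * s) := by
  have hid := normSq_one_sub_conj_mul_sub_normSq_sub a w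
  simp only [normSq_eq_norm_sq] at hid
  set x := ‖a‖
  set m := ‖w‖
  have hx₀ : 0 ≤ x := norm_nonneg a
  have hm₀ : 0 ≤ m := norm_nonneg w
  have hdist : (m - x) ^ 2 ≤ ‖w - a‖ ^ 2 := sq_le_sq' (abs_le.1 (abs_norm_sub_norm_le w a)).1
    (abs_le.1 (abs_norm_sub_norm_le w a)).2
  have hsq : ‖w - a‖ ^ 2 ≤ s ^ 2 * ‖1 - conj a * w‖ ^ 2 := by
    rw [← mul_pow]; exact pow_le_pow_left₀ (norm_nonneg _) h 2
  -- `hdist` and `hsq` combine to a quadratic inequality in `m` with roots `(x ± s) / (1 ± x s)`.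
  have hquad : (m * (1 + x * s) - (x + s)) * (m * (1 - x * s) - (x - s)) ≤ 0 := by
    nlinarith [mul_nonneg (sub_nonneg.2 hs₁) (add_nonneg hs₀ zero_le_one)]
  rw [le_div_iff₀ (by positivity)]
  nlinarith [mul_nonneg hs₀ (by nlinarith : (0:ℝ) ≤ 1 - x * m)]

theorem norm_le_add_div_one_add_mul_of_norm_le_one {ω : ℂ → ℂ}
    (hω : DifferentiableOn ℂ ω (ball 0 1)) (hbound : ∀ z ∈ ball (0:ℂ) 1, ‖ω z‖ ≤ 1)
    (h0 : ‖ω 0‖ < 1) {z : ℂ} (hz : z ∈ ball (0:ℂ) 1) :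
    ‖ω z‖ ≤ (‖ω 0‖ + ‖z‖) / (1 + ‖ω 0‖ * ‖z‖) := by
  set a := ω 0
  have hden : ∀ w ∈ ball (0:ℂ) 1, 1 - conj a * ω w ≠ 0 := fun w hw =>
    one_sub_conj_mul_ne_zero h0 (hbound w hw)
  set f : ℂ → ℂ := fun w => (ω w - a) / (1 - conj a * ω w)
  have hf : DifferentiableOn ℂ f (ball 0 1) :=
    (hω.sub_const a).div ((differentiableOn_const 1).sub (hω.const_mul _)) hden
  have hmaps : MapsTo f (ball 0 1) (closedBall 0 1) := fun w hw => by
    rw [mem_closedBall_zero_iff, norm_div, div_le_one (norm_pos_iff.2 (hden w hw))]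
    exact norm_sub_le_norm_one_sub_conj_mul h0.le (hbound w hw)
  have hschwarz : ‖f z‖ ≤ ‖z‖ :=
    norm_le_norm_of_mapsTo_ball hf hmaps (by simp [f, a]) (mem_ball_zero_iff.1 hz)
  rw [norm_div, div_le_iff₀ (norm_pos_iff.2 (hden z hz))] at hschwarz
  exact norm_le_of_norm_sub_le_mul_norm_one_sub_conj_mul h0 (hbound z hz) (norm_nonneg z)
    (mem_ball_zero_iff.1 hz).le hschwarz

noncomputable def radialPrimitive (ω : ℂ → ℂ) (z : ℂ) : ℂ :=
  ∫ t in (0:ℝ)..1, ω (t * z) * z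

lemma ofReal_mul_mem_ball {R t : ℝ} {z : ℂ} (ht : t ∈ uIcc 0 1) (hz : z ∈ ball (0:ℂ) R) :
    (t : ℂ) * z ∈ ball (0:ℂ) R := by
  rw [uIcc_of_le zero_le_one] at ht
  simpa only [real_smul] using (convex_ball (0:ℂ) R).smul_mem_of_zero_mem
    (mem_ball_self ((norm_nonneg z).trans_lt (mem_ball_zero_iff.1 hz))) hz ht

lemma radialPrimitive_eq_sub {ω G : ℂ → ℂ} {R : ℝ} (hω : ContinuousOn ω (ball 0 R))
    (hG : ∀ z ∈ ball (0:ℂ) R, HasDerivAt G (ω z) z) {z : ℂ} (hz : z ∈ ball (0:ℂ) R) :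
    radialPrimitive ω z = G z - G 0 := by
  have hderiv : ∀ t ∈ uIcc (0:ℝ) 1, HasDerivAt (fun s : ℝ => G (s * z)) (ω (t * z) * z) t :=
    fun t ht => by
      simpa using ((hG _ (ofReal_mul_mem_ball ht hz)).comp (t : ℂ)
        ((hasDerivAt_id (t : ℂ)).mul_const z)).comp_ofReal
  have hcont : ContinuousOn (fun t : ℝ => ω (t * z) * z) (uIcc 0 1) :=
    (hω.comp (by fun_prop) fun t ht => ofReal_mul_mem_ball ht hz).mul continuousOn_const
  rw [radialPrimitive,
    intervalIntegral.integral_eq_sub_of_hasDerivAt hderiv hcont.intervalIntegrable]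
  simp

theorem hasDerivAt_radialPrimitive {ω : ℂ → ℂ} {R : ℝ} (hω : DifferentiableOn ℂ ω (ball 0 R))
    {z : ℂ} (hz : z ∈ ball (0:ℂ) R) : HasDerivAt (radialPrimitive ω) (ω z) z := by
  obtain ⟨G, hG⟩ := hω.isExactOn_ball
  have heq : (fun w => G w - G 0) =ᶠ[𝓝 z] radialPrimitive ω :=
    Filter.eventually_of_mem (isOpen_ball.mem_nhds hz) fun w hw =>
      (radialPrimitive_eq_sub hω.continuousOn hG hw).symm
  exact ((hG z hz).sub_const (G 0)).congr_of_eventuallyEq heq.symm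

theorem lipschitzOnWith_radialPrimitive {ω : ℂ → ℂ} {R : ℝ}
    (hω : DifferentiableOn ℂ ω (ball 0 R)) (hbound : ∀ z ∈ ball (0:ℂ) R, ‖ω z‖ ≤ 1) :
    LipschitzOnWith 1 (radialPrimitive ω) (ball 0 R) :=
  (convex_ball 0 R).lipschitzOnWith_of_nnnorm_hasDerivWithin_le
    (fun z hz => (hasDerivAt_radialPrimitive hω hz).hasDerivWithinAt)
    fun z hz => by simpa [← NNReal.coe_le_coe] using hbound z hz

lemma intervalIntegrable_add_div_one_add_mul {x : ℝ} (hx : 0 ≤ x) :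
    IntervalIntegrable (fun t : ℝ => (x + t) / (1 + x * t)) MeasureTheory.volume 0 1 := by
  refine ContinuousOn.intervalIntegrable (ContinuousOn.div (by fun_prop) (by fun_prop) ?_)
  intro t ht
  rw [uIcc_of_le zero_le_one] at ht
  nlinarith [ht.1]

theorem norm_radialPrimitive_le {ω : ℂ → ℂ} (hω : DifferentiableOn ℂ ω (ball 0 1))
    (hbound : ∀ z ∈ ball (0:ℂ) 1, ‖ω z‖ ≤ 1) (h0 : ‖ω 0‖ < 1) {z : ℂ} (hz : z ∈ ball (0:ℂ) 1) :
    ‖radialPrimitive ω z‖ ≤ (∫ t in (0:ℝ)..1, (‖ω 0‖ + t) / (1 + ‖ω 0‖ * t)) * ‖z‖ := by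
  rw [radialPrimitive, intervalIntegral.integral_mul_const, norm_mul]
  gcongr
  refine intervalIntegral.norm_integral_le_of_norm_le zero_le_one (Filter.Eventually.of_forall
    fun t ht => ?_) (intervalIntegrable_add_div_one_add_mul (norm_nonneg _))
  have ht' : t ∈ uIcc (0:ℝ) 1 := uIoc_subset_uIcc (by rwa [uIoc_of_le zero_le_one])
  have htz : ‖(t : ℂ) * z‖ ≤ t := by
    rw [norm_mul, norm_real, Real.norm_of_nonneg ht.1.le]
    exact mul_le_of_le_one_right ht.1.le (mem_ball_zero_iff.1 hz).le
  calc ‖ω (t * z)‖ ≤ (‖ω 0‖ + ‖(t : ℂ) * z‖) / (1 + ‖ω 0‖ * ‖(t : ℂ) * z‖) :=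
        norm_le_add_div_one_add_mul_of_norm_le_one hω hbound h0 (ofReal_mul_mem_ball ht' hz)
    _ ≤ (‖ω 0‖ + t) / (1 + ‖ω 0‖ * t) :=
        add_div_one_add_mul_le_of_le (norm_nonneg _) h0.le (norm_nonneg _) htz

theorem exists_isFixedPt_of_lipschitzOnWith {α : Type*} [MetricSpace α] {f : α → α} {s : Set α}
    {K : NNReal} (hs : IsComplete s) (hne : s.Nonempty) (hsf : MapsTo f s s) (hK : K < 1)
    (hf : LipschitzOnWith K f s) : ∃ y ∈ s, Function.IsFixedPt f y :=
  let ⟨_, hx⟩ := hne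
  let ⟨y, hy, hfix, _⟩ := ContractingWith.exists_fixedPoint' hs hsf
    ⟨hK, hf.mapsToRestrict hsf⟩ hx (edist_ne_top _ _)
  ⟨y, hy, hfix⟩

lemma norm_mul_sub_mul_le {g : ℂ → ℂ} {r v : ℝ} (hg : ∀ z ∈ closedBall (0:ℂ) r, ‖g z‖ ≤ v)
    (hg_lip : LipschitzOnWith 1 g (closedBall 0 r)) {z₁ z₂ : ℂ} (hz₁ : z₁ ∈ closedBall (0:ℂ) r)
    (hz₂ : z₂ ∈ closedBall (0:ℂ) r) : ‖z₁ * g z₁ - z₂ * g z₂‖ ≤ (v + r) * ‖z₁ - z₂‖ := by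
  have hlip : ‖g z₁ - g z₂‖ ≤ ‖z₁ - z₂‖ := by
    simpa [dist_eq_norm] using hg_lip.dist_le_mul z₁ hz₁ z₂ hz₂
  calc ‖z₁ * g z₁ - z₂ * g z₂‖ = ‖(z₁ - z₂) * g z₁ + z₂ * (g z₁ - g z₂)‖ := by ring_nf
    _ ≤ ‖z₁ - z₂‖ * ‖g z₁‖ + ‖z₂‖ * ‖g z₁ - g z₂‖ := by
        simpa only [norm_mul] using norm_add_le ((z₁ - z₂) * g z₁) (z₂ * (g z₁ - g z₂))
    _ ≤ ‖z₁ - z₂‖ * v + r * ‖z₁ - z₂‖ := by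
        have hz₂' : ‖z₂‖ ≤ r := mem_closedBall_zero_iff.1 hz₂
        have hr : 0 ≤ r := (norm_nonneg _).trans hz₂'
        gcongr
        exact hg z₁ hz₁
    _ = (v + r) * ‖z₁ - z₂‖ := by ring

theorem exists_one_div_mul_one_add_mul_eq_self {g : ℂ → ℂ} {b c : ℂ} {r v : ℝ} (hr₀ : 0 ≤ r)
    (hr₁ : r < 1) (hc : ‖c‖ ≤ 1) (hrb : 1 + ‖c‖ * v ≤ r * ‖b‖)
    (hg : ∀ z ∈ closedBall (0:ℂ) r, ‖g z‖ ≤ v) (hg_lip : LipschitzOnWith 1 g (closedBall 0 r)) :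
    ∃ z ∈ closedBall (0:ℂ) r, 1 / b * (1 + c * z * g z) = z := by
  have hv : 0 ≤ v := (norm_nonneg _).trans (hg 0 (mem_closedBall_self hr₀))
  have hb : 0 < ‖b‖ := by nlinarith [norm_nonneg c, norm_nonneg b]
  set F : ℂ → ℂ := fun z => 1 / b * (1 + c * z * g z)
  have hmaps : MapsTo F (closedBall 0 r) (closedBall 0 r) := fun z hz => by
    have hz' : ‖z‖ ≤ 1 := (mem_closedBall_zero_iff.1 hz).trans hr₁.le
    rw [mem_closedBall_zero_iff, norm_mul, norm_div, norm_one, one_div_mul_eq_div,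
      div_le_iff₀ hb]
    calc ‖1 + c * z * g z‖ ≤ 1 + ‖c‖ * ‖z‖ * ‖g z‖ := by
          simpa only [norm_one, norm_mul] using norm_add_le (1 : ℂ) (c * z * g z)
      _ ≤ 1 + ‖c‖ * 1 * v := by gcongr; exact hg z hz
      _ ≤ r * ‖b‖ := by linarith
  have hlip : LipschitzOnWith (Real.toNNReal (‖c‖ * (v + r) / ‖b‖)) F (closedBall 0 r) := by
    refine LipschitzOnWith.of_dist_le' fun z₁ hz₁ z₂ hz₂ => ?_
    have hdiff : F z₁ - F z₂ = c / b * (z₁ * g z₁ - z₂ * g z₂) := by simp only [F]; ring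
    rw [dist_eq_norm, dist_eq_norm, hdiff, norm_mul, norm_div, mul_div_right_comm, mul_assoc]
    gcongr
    exact norm_mul_sub_mul_le hg hg_lip hz₁ hz₂
  have hK : Real.toNNReal (‖c‖ * (v + r) / ‖b‖) < 1 := by
    rw [Real.toNNReal_lt_one, div_lt_one hb]
    nlinarith [norm_nonneg c]
  exact exists_isFixedPt_of_lipschitzOnWith isClosed_closedBall.isComplete
    (nonempty_closedBall.2 hr₀) hmaps hK hlip

theorem stmt_11 (lam : ℝ) (hlam : 0 < lam) (hlam1 : lam < 1)
    (ω : ℂ → ℂ) (a : ℂ)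
    (hω : DifferentiableOn ℂ ω (ball (0:ℂ) 1))
    (hbound : ∀ z ∈ ball (0:ℂ) 1, ‖ω z‖ ≤ 1)
    (h0 : ω 0 = a) (ha : ‖a‖ < 1)
    (a₂ : ℂ)
    (ha₂ : 1 + lam * (∫ t in (0:ℝ)..1, (‖a‖ + t) / (1 + ‖a‖ * t)) < ‖a₂‖) :
    ∃ z₀ ∈ ball (0:ℂ) 1,
      (1 / a₂) * (1 + (lam:ℂ) * z₀ * ∫ t in (0:ℝ)..1, ω ((t:ℂ) * z₀) * z₀) = z₀ ∧
      1 - a₂ * z₀ + (lam:ℂ) * z₀ * (∫ t in (0:ℝ)..1, ω ((t:ℂ) * z₀) * z₀) = 0 := by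
  subst h0
  set v := ∫ t in (0:ℝ)..1, (‖ω 0‖ + t) / (1 + ‖ω 0‖ * t)
  have hv : 0 ≤ v := intervalIntegral.integral_nonneg zero_le_one fun t ht =>
    div_nonneg (by linarith [norm_nonneg (ω 0), ht.1]) (by nlinarith [norm_nonneg (ω 0), ht.1])
  have hb : 0 < ‖a₂‖ := by nlinarith
  set r := (1 + lam * v) / ‖a₂‖
  have hr₀ : 0 ≤ r := by positivity
  have hr₁ : r < 1 := (div_lt_one hb).2 ha₂
  have hsub : closedBall (0:ℂ) r ⊆ ball 0 1 := closedBall_subset_ball hr₁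
  have hg : ∀ z ∈ closedBall (0:ℂ) r, ‖radialPrimitive ω z‖ ≤ v := fun z hz =>
    (norm_radialPrimitive_le hω hbound ha (hsub hz)).trans <| mul_le_of_le_one_right hv <|
      mem_closedBall_zero_iff.1 (closedBall_subset_closedBall hr₁.le hz)
  have hlam_norm : ‖(lam : ℂ)‖ = lam := by rw [norm_real, Real.norm_of_nonneg hlam.le]
  obtain ⟨z, hz, hfix⟩ := exists_one_div_mul_one_add_mul_eq_self (b := a₂) (c := lam) hr₀ hr₁
    (by rw [hlam_norm]; exact hlam1.le) (by rw [hlam_norm, div_mul_cancel₀ _ hb.ne']) hg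
    ((lipschitzOnWith_radialPrimitive hω hbound).mono hsub)
  refine ⟨z, hsub hz, hfix, ?_⟩
  rw [radialPrimitive, one_div_mul_eq_div, div_eq_iff (norm_pos_iff.1 hb)] at hfix
  linear_combination hfix
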